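/- arXiv:2302.04407 — 3 statements merged into one kernel-verified Lean document; each statement's English description precedes it below -/
import Mathlib

section
/- Fix α > 0, κ ≥ 0 and an index j ≥ 1. Let (X_i)_{i≥1} be independent random variables on a probability space such that X_i has the Beta(1, α + κ·δ(i = j)) law, i.e. X_i has density x ↦ β_i (1−x)^{β_i − 1} on [0,1] with β_i = α + κ if i = j and β_i = α otherwise. Define the agile stick-breaking weights a_i = X_i ∏_{n=1}^{i−1} (1 − X_n). Then ∑_{i=1}^∞ a_i = 1 almost surely. -/
/-!
Telescoping gives `∑_{i<N} a_i = 1 - ∏_{n<N} (1 - X_n)`, and since `1 - x ≤ e^{-x}` this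
product is at most `exp (-∑_{n<N} X_n)`. It therefore suffices that `∑ X_n = ∞` almost surely.
The `X_n` follow only two laws, `Beta(1, α)` and `Beta(1, α + κ)`, both charging `[1/2, 1]`, so
the independent events `{X_n ≥ 1/2}` have probabilities bounded away from zero; by the second
Borel–Cantelli lemma infinitely many of them occur, almost surely.
-/

open MeasureTheory ProbabilityTheory

/-- For `b > 0`, the measure `Beta(1, b)` on `ℝ`, with density `x ↦ b (1−x)^(b−1)` on
`[0,1]` (and `0` elsewhere) with respect to Lebesgue measure. -/
noncomputable def betaOne (b : ℝ) : Measure ℝ :=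
  volume.withDensity fun x =>
    ENNReal.ofReal (if x ∈ Set.Icc (0 : ℝ) 1 then b * (1 - x) ^ (b - 1) else 0)

open Filter Topology Finset
open scoped ENNReal

def stickWeight {R : Type*} [CommRing R] (x : ℕ → R) (i : ℕ) : R :=
  x i * ∏ n ∈ range i, (1 - x n)

theorem sum_range_stickWeight {R : Type*} [CommRing R] (x : ℕ → R) (N : ℕ) :
    ∑ i ∈ range N, stickWeight x i = 1 - ∏ n ∈ range N, (1 - x n) := by
  induction N with
  | zero => simp
  | succ N ih => rw [sum_range_succ, ih, prod_range_succ, stickWeight]; ring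

theorem Finset.prod_one_sub_le_exp_neg_sum {ι : Type*} {s : Finset ι} {x : ι → ℝ}
    (hx : ∀ i ∈ s, x i ≤ 1) : ∏ i ∈ s, (1 - x i) ≤ Real.exp (-∑ i ∈ s, x i) := by
  rw [← sum_neg_distrib, Real.exp_sum]
  refine prod_le_prod (fun i hi => sub_nonneg.2 (hx i hi)) fun i _ => ?_
  linarith [Real.add_one_le_exp (-x i)]

theorem tendsto_prod_range_one_sub_of_not_summable {x : ℕ → ℝ} (h0 : ∀ n, 0 ≤ x n)
    (h1 : ∀ n, x n ≤ 1) (hx : ¬Summable x) :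
    Tendsto (fun N => ∏ n ∈ range N, (1 - x n)) atTop (𝓝 0) := by
  have hsum : Tendsto (fun N => ∑ n ∈ range N, x n) atTop atTop :=
    (not_summable_iff_tendsto_nat_atTop_of_nonneg h0).1 hx
  refine squeeze_zero (fun N => prod_nonneg fun n _ => sub_nonneg.2 (h1 n))
    (fun N => prod_one_sub_le_exp_neg_sum fun n _ => h1 n) ?_
  exact Real.tendsto_exp_neg_atTop_nhds_zero.comp hsum

theorem hasSum_stickWeight_one {x : ℕ → ℝ} (hx : ∀ n, x n ∈ Set.Icc (0 : ℝ) 1)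
    (hdiv : ¬Summable x) : HasSum (stickWeight x) 1 := by
  have h0 n := (hx n).1
  have h1 n := (hx n).2
  have hweight i : 0 ≤ stickWeight x i :=
    mul_nonneg (h0 i) (prod_nonneg fun n _ => sub_nonneg.2 (h1 n))
  rw [hasSum_iff_tendsto_nat_of_nonneg hweight]
  simpa [sum_range_stickWeight] using
    (tendsto_prod_range_one_sub_of_not_summable h0 h1 hdiv).const_sub 1

theorem not_summable_of_frequently_le {x : ℕ → ℝ} {ε : ℝ} (hε : 0 < ε)
    (h : ∃ᶠ n in atTop, ε ≤ x n) : ¬Summable x := fun hx => by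
  obtain ⟨n, hle, hlt⟩ :=
    (h.and_eventually (hx.tendsto_atTop_zero.eventually (gt_mem_nhds hε))).exists
  exact hle.not_gt hlt

theorem measurable_betaOne_density (b : ℝ) : Measurable fun x : ℝ =>
    ENNReal.ofReal (if x ∈ Set.Icc (0 : ℝ) 1 then b * (1 - x) ^ (b - 1) else 0) :=
  (Measurable.ite measurableSet_Icc (by fun_prop) measurable_const).ennreal_ofReal

theorem ae_betaOne_mem_Icc (b : ℝ) : ∀ᵐ x ∂betaOne b, x ∈ Set.Icc (0 : ℝ) 1 := by
  rw [betaOne, ae_withDensity_iff (measurable_betaOne_density b)]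
  exact ae_of_all _ fun x hx => by_contra fun h => hx (by simp [h])

theorem betaOne_Ici_pos {b : ℝ} (hb : 0 < b) {t : ℝ} (ht : t < 1) :
    0 < betaOne b (Set.Ici t) := by
  rw [betaOne, withDensity_apply _ measurableSet_Ici,
    setLIntegral_pos_iff (measurable_betaOne_density b)]
  refine lt_of_lt_of_le ?_ (measure_mono (s := Set.Ioo (max t 0) 1) fun x ⟨hx0, hx1⟩ => ?_)
  · simpa using ht
  rw [max_lt_iff] at hx0
  refine ⟨?_, Set.mem_Ici.2 hx0.1.le⟩
  rw [Function.mem_support, if_pos ⟨hx0.2.le, hx1.le⟩, ENNReal.ofReal_ne_zero_iff]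
  exact mul_pos hb (Real.rpow_pos_of_pos (sub_pos.2 hx1) _)

theorem ProbabilityTheory.iIndepFun.iIndepSet_preimage {ι Ω β : Type*} [MeasurableSpace Ω]
    [MeasurableSpace β] {μ : Measure Ω} {X : ι → Ω → β} (hX : ∀ i, Measurable (X i))
    (hind : iIndepFun X μ) {S : ι → Set β} (hS : ∀ i, MeasurableSet (S i)) :
    iIndepSet (fun i => X i ⁻¹' S i) μ :=
  (iIndepSet_iff_meas_biInter fun i => hX i (hS i)).2 fun _ =>
    hind.meas_biInter fun i _ => ⟨S i, hS i, rfl⟩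

theorem ae_frequently_mem_of_iIndepSet {Ω : Type*} [MeasurableSpace Ω] {μ : Measure Ω}
    {s : ℕ → Set Ω} (hs : ∀ n, MeasurableSet (s n)) (hind : iIndepSet s μ)
    (hsum : ∑' n, μ (s n) = ∞) : ∀ᵐ ω ∂μ, ∃ᶠ n in atTop, ω ∈ s n := by
  have := hind.isProbabilityMeasure
  have hlimsup : ∀ᵐ ω ∂μ, ω ∈ limsup s atTop := by
    rw [ae_mem_iff_measure_eq (MeasurableSet.measurableSet_limsup hs).nullMeasurableSet,
      measure_limsup_eq_one hs hind hsum, measure_univ]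
  exact hlimsup.mono fun ω => mem_limsup_iff_frequently_mem.1

theorem ENNReal.tsum_eq_top_of_forall_le {f : ℕ → ℝ≥0∞} {c : ℝ≥0∞} (hc : c ≠ 0)
    (h : ∀ n, c ≤ f n) : ∑' n, f n = ∞ :=
  top_unique <| (tsum_const_eq_top_of_ne_zero hc).symm.le.trans (ENNReal.tsum_le_tsum h)

/-- **The agile stick-breaking weights sum to one almost surely.**
Fix `α > 0`, `κ ≥ 0` and an index `j` (0-indexed version of the sticks `(X_i)_{i ≥ 1}` and
the designated index `j ≥ 1`).  Let `(X_i)_{i ∈ ℕ}` be independent random variables on a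
probability space `(Ω, μ)` such that `X i` has law `Beta(1, α + κ·δ(i = j))`.  Then the
agile stick-breaking weights `a i = X i * ∏_{n < i} (1 − X n)` satisfy
`∑_{i=0}^∞ a i = 1` almost surely. -/
theorem agile_stick_breaking_sums_to_one
    (α κ : ℝ) (hα : 0 < α) (hκ : 0 ≤ κ) (j : ℕ)
    {Ω : Type*} [MeasurableSpace Ω] (μ : Measure Ω) [IsProbabilityMeasure μ]
    (X : ℕ → Ω → ℝ) (hXmeas : ∀ i, Measurable (X i))
    (hindep : iIndepFun X μ)
    (hlaw : ∀ i, Measure.map (X i) μ = betaOne (if i = j then α + κ else α)) :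
    ∀ᵐ ω ∂μ, (∑' i : ℕ, X i ω * ∏ n ∈ Finset.range i, (1 - X n ω)) = 1 := by
  have hmem : ∀ᵐ ω ∂μ, ∀ i, X i ω ∈ Set.Icc (0 : ℝ) 1 := ae_all_iff.2 fun i =>
    ae_of_ae_map (hXmeas i).aemeasurable (hlaw i ▸ ae_betaOne_mem_Icc _)
  set c := min (betaOne α (Set.Ici 2⁻¹)) (betaOne (α + κ) (Set.Ici 2⁻¹))
  have hc : c ≠ 0 := (lt_min (betaOne_Ici_pos hα (by norm_num))
    (betaOne_Ici_pos (by linarith) (by norm_num))).ne'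
  have hle i : c ≤ μ (X i ⁻¹' Set.Ici 2⁻¹) := by
    rw [← Measure.map_apply (hXmeas i) measurableSet_Ici, hlaw i]
    split_ifs
    exacts [min_le_right _ _, min_le_left _ _]
  have hfreq : ∀ᵐ ω ∂μ, ∃ᶠ n in atTop, X n ω ∈ Set.Ici (2⁻¹ : ℝ) :=
    ae_frequently_mem_of_iIndepSet (fun i => hXmeas i measurableSet_Ici)
      (hindep.iIndepSet_preimage hXmeas fun _ => measurableSet_Ici)
      (ENNReal.tsum_eq_top_of_forall_le hc hle)
  filter_upwards [hmem, hfreq] with ω hω hωfreq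
  exact (hasSum_stickWeight_one hω (not_summable_of_frequently_le (by norm_num) hωfreq)).tsum_eq
end

section
/- Fix α > 0, κ ≥ 0 and an index j ≥ 1. Let (X_i)_{i≥1} be independent random variables such that X_i has the Beta(1, α + κ·δ(i = j)) law (density x ↦ β_i(1−x)^{β_i−1} on [0,1] with β_j = α + κ and β_i = α for i ≠ j), and let a_j = X_j ∏_{n=1}^{j−1} (1 − X_n) be the j-th agile stick-breaking weight (the self-transition probability of state j under the agile prior). Then E[a_j] = (1/(1 + α + κ)) · (α/(1 + α))^{j−1}. In particular E[a_j] is strictly decreasing in κ, so a larger agile hyper-parameter κ yields a strictly smaller expected self-transition probability. -/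
/-!
Independence factorizes the expectation of `a_j = X_j ∏_{n<j} (1 - X_n)` into
`E[X_j] ∏_{n<j} E[1 - X_n]`, and the two Beta(1, b) moments `E[X] = 1/(1+b)` and
`E[1 - X] = b/(1+b)` follow from `∫₀¹ (1-x)^c dx = 1/(c+1)`.
-/

open MeasureTheory ProbabilityTheory

open Finset

lemma integral_one_sub_rpow {c : ℝ} (hc : -1 < c) :
    ∫ x in (0 : ℝ)..1, (1 - x) ^ c = 1 / (c + 1) := by
  rw [intervalIntegral.integral_comp_sub_left (fun x => x ^ c), sub_self, sub_zero,
    integral_rpow (Or.inl hc), Real.one_rpow, Real.zero_rpow (by linarith), sub_zero]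

lemma intervalIntegrable_one_sub_rpow {c : ℝ} (hc : -1 < c) :
    IntervalIntegrable (fun x => (1 - x) ^ c) volume (0 : ℝ) 1 := by
  simpa using
    ((intervalIntegral.intervalIntegrable_rpow' (a := 0) (b := 1) hc).comp_sub_left 1).symm

lemma integral_betaOne {b : ℝ} (hb : 0 ≤ b) (g : ℝ → ℝ) :
    ∫ x, g x ∂betaOne b = ∫ x in (0 : ℝ)..1, b * (1 - x) ^ (b - 1) * g x := by
  have hdensity : Measurable fun x : ℝ =>
      ENNReal.ofReal (if x ∈ Set.Icc (0 : ℝ) 1 then b * (1 - x) ^ (b - 1) else 0) :=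
    (Measurable.ite measurableSet_Icc (by fun_prop) measurable_const).ennreal_ofReal
  rw [betaOne, integral_withDensity_eq_integral_toReal_smul hdensity
    (ae_of_all _ fun _ => ENNReal.ofReal_lt_top),
    intervalIntegral.integral_of_le zero_le_one, ← integral_Icc_eq_integral_Ioc,
    ← integral_indicator measurableSet_Icc]
  congr 1 with x
  by_cases hx : x ∈ Set.Icc (0 : ℝ) 1
  · rw [if_pos hx, Set.indicator_of_mem hx, ENNReal.toReal_ofReal
      (mul_nonneg hb (Real.rpow_nonneg (sub_nonneg.2 hx.2) _)), smul_eq_mul]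
  · simp [hx]

lemma Real.rpow_sub_one_mul_self {x b : ℝ} (hx : 0 ≤ x) (hb : b ≠ 0) :
    x ^ (b - 1) * x = x ^ b := by
  rw [← Real.rpow_add_one' hx (by simpa using hb), sub_add_cancel]

lemma integral_one_sub_betaOne {b : ℝ} (hb : 0 < b) :
    ∫ x, (1 - x) ∂betaOne b = b / (1 + b) := by
  have hEq : Set.EqOn (fun x => b * (1 - x) ^ (b - 1) * (1 - x)) (fun x => b * (1 - x) ^ b)
      (Set.uIcc 0 1) := fun x hx => by
    rw [Set.uIcc_of_le zero_le_one] at hx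
    simp only [mul_assoc, Real.rpow_sub_one_mul_self (sub_nonneg.2 hx.2) hb.ne']
  rw [integral_betaOne hb.le, intervalIntegral.integral_congr hEq,
    intervalIntegral.integral_const_mul, integral_one_sub_rpow (by linarith), add_comm]
  ring

lemma integral_id_betaOne {b : ℝ} (hb : 0 < b) : ∫ x, x ∂betaOne b = 1 / (1 + b) := by
  have hEq : Set.EqOn (fun x => b * (1 - x) ^ (b - 1) * x)
      (fun x => b * (1 - x) ^ (b - 1) - b * (1 - x) ^ b) (Set.uIcc 0 1) := fun x hx => by
    rw [Set.uIcc_of_le zero_le_one] at hx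
    dsimp only
    rw [← Real.rpow_sub_one_mul_self (sub_nonneg.2 hx.2) hb.ne']
    ring
  have hb' : -1 < b - 1 := by linarith
  rw [integral_betaOne hb.le, intervalIntegral.integral_congr hEq,
    intervalIntegral.integral_sub ((intervalIntegrable_one_sub_rpow hb').const_mul b)
      ((intervalIntegrable_one_sub_rpow (by linarith)).const_mul b),
    intervalIntegral.integral_const_mul, intervalIntegral.integral_const_mul,
    integral_one_sub_rpow hb', integral_one_sub_rpow (by linarith), sub_add_cancel]
  field_simp
  ring

lemma ProbabilityTheory.iIndepFun.integral_comp_mul_prod_range_comp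
    {Ω : Type*} [MeasurableSpace Ω] {μ : Measure Ω} {X : ℕ → Ω → ℝ}
    (hX : iIndepFun X μ) (mX : ∀ i, AEMeasurable (X i) μ)
    {f g : ℝ → ℝ} (hf : Measurable f) (hg : Measurable g) (j : ℕ) :
    ∫ ω, f (X j ω) * ∏ n ∈ range j, g (X n ω) ∂μ =
      (∫ ω, f (X j ω) ∂μ) * ∏ n ∈ range j, ∫ ω, g (X n ω) ∂μ := by
  let F : Fin (j + 1) → ℝ → ℝ := Fin.lastCases f fun _ => g
  have hF : ∀ i, Measurable (F i) :=
    Fin.lastCases (by simpa [F] using hf) fun _ => by simpa [F] using hg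
  have h := (hX.precomp Fin.val_injective).integral_fun_prod_comp (f := F) (fun i => mX i)
    fun i => (hF i).aestronglyMeasurable
  simp only [Fin.prod_univ_castSucc, F, Fin.lastCases_last, Fin.lastCases_castSucc,
    Fin.val_castSucc, Fin.val_last] at h
  rw [mul_comm]
  simp_rw [prod_range, mul_comm (f _)]
  exact h

/-- **Expected self-transition weight under the agile prior.**
Fix `α > 0`, `κ ≥ 0` and an index `j` (0-indexed version of `(X_i)_{i ≥ 1}` and `j ≥ 1`;
the exponent `j` below corresponds to `j − 1` in 1-indexed notation).  Let `(X_i)` be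
independent with `X i ~ Beta(1, α + κ·δ(i = j))`, and let
`a j = X j * ∏_{n < j} (1 − X n)` be the `j`-th agile stick-breaking weight.  Then
`E[a j] = (1/(1 + α + κ)) · (α/(1 + α))^j`, and this quantity is strictly decreasing in
the agile hyper-parameter `κ` (on `κ ≥ 0`), so a larger `κ` yields a strictly smaller
expected self-transition probability. -/
theorem agile_stick_breaking_expected_weight
    (α κ : ℝ) (hα : 0 < α) (hκ : 0 ≤ κ) (j : ℕ)
    {Ω : Type*} [MeasurableSpace Ω] (μ : Measure Ω) [IsProbabilityMeasure μ]
    (X : ℕ → Ω → ℝ) (hXmeas : ∀ i, Measurable (X i))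
    (hindep : iIndepFun X μ)
    (hlaw : ∀ i, Measure.map (X i) μ = betaOne (if i = j then α + κ else α)) :
    (∫ ω, X j ω * ∏ n ∈ Finset.range j, (1 - X n ω) ∂μ) =
      (1 / (1 + α + κ)) * (α / (1 + α)) ^ j ∧
    StrictAntiOn (fun k : ℝ => (1 / (1 + α + k)) * (α / (1 + α)) ^ j)
      (Set.Ici (0 : ℝ)) := by
  have hmarginal : ∀ i {f : ℝ → ℝ}, Measurable f →
      ∫ ω, f (X i ω) ∂μ = ∫ x, f x ∂betaOne (if i = j then α + κ else α) := by
    intro i f hf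
    rw [← hlaw i, integral_map (hXmeas i).aemeasurable hf.aestronglyMeasurable]
  have hXj : ∫ ω, X j ω ∂μ = 1 / (1 + α + κ) := by
    rw [hmarginal j measurable_id', if_pos rfl, integral_id_betaOne (by positivity), add_assoc]
  have hXn : ∀ n ∈ range j, ∫ ω, (1 - X n ω) ∂μ = α / (1 + α) := fun n hn => by
    rw [hmarginal n (f := fun x => 1 - x) (by fun_prop),
      if_neg (mem_range.1 hn).ne, integral_one_sub_betaOne hα]
  refine ⟨?_, fun k₁ hk₁ k₂ _ hlt => ?_⟩
  · rw [hindep.integral_comp_mul_prod_range_comp (fun i => (hXmeas i).aemeasurable)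
      (f := fun x => x) (g := fun x => 1 - x) measurable_id' (by fun_prop) j,
      hXj, prod_congr rfl hXn, prod_const, card_range]
  · dsimp only
    gcongr
    exact add_pos_of_pos_of_nonneg (by positivity) hk₁
end

section
/- Let Z₁ and Z₂ be nonempty finite types, let p : Z₁ × Z₂ → ℝ be strictly positive (the joint density of the data with the two latent blocks), and let q₂ : Z₂ → ℝ be a fixed strictly positive probability vector. For a strictly positive probability vector q₁ : Z₁ → ℝ define the mean-field ELBO L(q₁) = ∑_{z₁, z₂} q₁(z₁) q₂(z₂) ln( p(z₁, z₂) / (q₁(z₁) q₂(z₂)) ). Let q₁* : Z₁ → ℝ be the probability vector with q₁*(z₁) = exp(∑_{z₂} q₂(z₂) ln p(z₁, z₂)) / ∑_{z₁'} exp(∑_{z₂} q₂(z₂) ln p(z₁', z₂)). Then for every strictly positive probability vector q₁, L(q₁) ≤ L(q₁*); that is, the coordinate-ascent variational update q₁*(z₁) ∝ exp(E_{q₂}[ln p(z₁, ·)]) maximizes the evidence lower bound over the first factor. -/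
/-- The mean-field evidence lower bound of the product distribution `q₁ ⊗ q₂` relative to
the positive joint weights `p` on `Z₁ × Z₂`:
`L(q₁) = ∑_{z₁, z₂} q₁ z₁ * q₂ z₂ * ln (p (z₁, z₂) / (q₁ z₁ * q₂ z₂))`. -/
noncomputable def meanFieldELBO {Z₁ Z₂ : Type*} [Fintype Z₁] [Fintype Z₂]
    (p : Z₁ × Z₂ → ℝ) (q₂ : Z₂ → ℝ) (q₁ : Z₁ → ℝ) : ℝ :=
  ∑ z₁, ∑ z₂, q₁ z₁ * q₂ z₂ * Real.log (p (z₁, z₂) / (q₁ z₁ * q₂ z₂))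

/-- The coordinate-ascent variational update of the first factor:
`q₁* z₁ ∝ exp (∑_{z₂} q₂ z₂ * ln p (z₁, z₂))`, normalized to a probability vector. -/
noncomputable def caviUpdate {Z₁ Z₂ : Type*} [Fintype Z₁] [Fintype Z₂]
    (p : Z₁ × Z₂ → ℝ) (q₂ : Z₂ → ℝ) (z₁ : Z₁) : ℝ :=
  Real.exp (∑ z₂, q₂ z₂ * Real.log (p (z₁, z₂))) /
    ∑ z₁', Real.exp (∑ z₂, q₂ z₂ * Real.log (p (z₁', z₂)))

/-- **The coordinate-ascent variational update maximizes the mean-field ELBO.**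
For nonempty finite latent blocks `Z₁, Z₂`, strictly positive joint weights `p`, and a fixed
strictly positive probability vector `q₂`, every strictly positive probability vector `q₁`
satisfies `L(q₁) ≤ L(q₁*)`, where `q₁* z₁ ∝ exp (E_{q₂}[ln p (z₁, ·)])` is the
coordinate-ascent update. -/
theorem cavi_update_maximizes_elbo (Z₁ Z₂ : Type*) [Fintype Z₁] [Fintype Z₂]
    [Nonempty Z₁] [Nonempty Z₂]
    (p : Z₁ × Z₂ → ℝ) (hp : ∀ z, 0 < p z)
    (q₂ : Z₂ → ℝ) (hq₂ : ∀ z, 0 < q₂ z) (hq₂sum : ∑ z, q₂ z = 1)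
    (q₁ : Z₁ → ℝ) (hq₁ : ∀ z, 0 < q₁ z) (hq₁sum : ∑ z, q₁ z = 1) :
    meanFieldELBO p q₂ q₁ ≤ meanFieldELBO p q₂ (caviUpdate p q₂) := by
  classical
  set f : Z₁ → ℝ := fun z₁ => ∑ z₂, q₂ z₂ * Real.log (p (z₁, z₂)) with hf
  set S : ℝ := ∑ z₁, Real.exp (f z₁) with hS
  have hSpos : 0 < S :=
    Finset.sum_pos (fun i _ => Real.exp_pos _) Finset.univ_nonempty
  set q₁' : Z₁ → ℝ := caviUpdate p q₂ with hq₁'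
  have hq₁'def : ∀ z, q₁' z = Real.exp (f z) / S := fun z => rfl
  have hq₁'pos : ∀ z, 0 < q₁' z := fun z => div_pos (Real.exp_pos _) hSpos
  have hq₁'sum : ∑ z, q₁' z = 1 := by
    simp only [hq₁'def]
    rw [← Finset.sum_div]
    exact div_self hSpos.ne'
  set T : ℝ := ∑ z₂, q₂ z₂ * Real.log (q₂ z₂) with hT
  have hdec : ∀ q : Z₁ → ℝ, (∀ z, 0 < q z) → (∑ z, q z = 1) →
      meanFieldELBO p q₂ q = (∑ z₁, q z₁ * (f z₁ - Real.log (q z₁))) - T := by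
    intro q hq hqs
    unfold meanFieldELBO
    have hpt : ∀ z₁, ∑ z₂, q z₁ * q₂ z₂ * Real.log (p (z₁, z₂) / (q z₁ * q₂ z₂))
        = q z₁ * (f z₁ - Real.log (q z₁)) - q z₁ * T := by
      intro z₁
      have : ∀ z₂ : Z₂, q z₁ * q₂ z₂ * Real.log (p (z₁, z₂) / (q z₁ * q₂ z₂))
          = q z₁ * (q₂ z₂ * Real.log (p (z₁, z₂)))
            - (q z₁ * Real.log (q z₁)) * q₂ z₂
            - q z₁ * (q₂ z₂ * Real.log (q₂ z₂)) := by
        intro z₂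
        rw [Real.log_div (hp _).ne' (mul_pos (hq z₁) (hq₂ z₂)).ne',
          Real.log_mul (hq z₁).ne' (hq₂ z₂).ne']
        ring
      simp only [this]
      rw [Finset.sum_sub_distrib, Finset.sum_sub_distrib, ← Finset.mul_sum,
        ← Finset.mul_sum, ← Finset.mul_sum, hq₂sum]
      simp only [hf, hT]
      ring
    simp only [hpt]
    rw [Finset.sum_sub_distrib, ← Finset.sum_mul, hqs]
    ring
  rw [hdec q₁ hq₁ hq₁sum, hdec q₁' hq₁'pos hq₁'sum]
  have hlogq₁' : ∀ z, Real.log (q₁' z) = f z - Real.log S := by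
    intro z
    rw [hq₁'def, Real.log_div (Real.exp_pos _).ne' hSpos.ne', Real.log_exp]
  have hR : ∑ z₁, q₁' z₁ * (f z₁ - Real.log (q₁' z₁)) = Real.log S := by
    have : ∀ z, q₁' z * (f z - Real.log (q₁' z)) = q₁' z * Real.log S := by
      intro z; rw [hlogq₁' z]; ring
    simp only [this]
    rw [← Finset.sum_mul, hq₁'sum, one_mul]
  rw [hR]
  have hgibbs : ∑ z₁, q₁ z₁ * (f z₁ - Real.log (q₁ z₁))
      ≤ (∑ z₁, q₁ z₁ * Real.log (q₁' z₁ / q₁ z₁)) + Real.log S := by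
    have : ∀ z, q₁ z * (f z - Real.log (q₁ z))
        = q₁ z * Real.log (q₁' z / q₁ z) + q₁ z * Real.log S := by
      intro z
      rw [Real.log_div (hq₁'pos z).ne' (hq₁ z).ne', hlogq₁' z]
      ring
    simp only [this]
    rw [Finset.sum_add_distrib, ← Finset.sum_mul, hq₁sum, one_mul]
  have hkl : (∑ z₁, q₁ z₁ * Real.log (q₁' z₁ / q₁ z₁)) ≤ 0 := by
    have hle : ∀ z, q₁ z * Real.log (q₁' z / q₁ z) ≤ q₁' z - q₁ z := by
      intro z
      have h1 : Real.log (q₁' z / q₁ z) ≤ q₁' z / q₁ z - 1 :=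
        Real.log_le_sub_one_of_pos (div_pos (hq₁'pos z) (hq₁ z))
      calc q₁ z * Real.log (q₁' z / q₁ z) ≤ q₁ z * (q₁' z / q₁ z - 1) :=
            mul_le_mul_of_nonneg_left h1 (hq₁ z).le
        _ = q₁' z - q₁ z := by
              rw [mul_sub, mul_div_cancel₀ _ (hq₁ z).ne', mul_one]
    calc (∑ z₁, q₁ z₁ * Real.log (q₁' z₁ / q₁ z₁)) ≤ ∑ z₁, (q₁' z₁ - q₁ z₁) :=
          Finset.sum_le_sum (fun i _ => hle i)
      _ = 0 := by rw [Finset.sum_sub_distrib, hq₁'sum, hq₁sum, sub_self]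
  linarith [hgibbs, hkl]
end
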